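/- Let p = 4m+1 be prime with m ≥ 1, and let a : {0,…,2m} → ZMod p be injective and satisfy: for every x ∈ ZMod p, either x or −x lies in the image of a (so that the image is a half-system containing 0, with ZMod p the disjoint union of {0}, the nonzero image, and its negatives). Let δ₁, δ₂ ∈ {1, −1}, and let D ∈ ZMod p be the determinant of the (2m+1)×(2m+1) matrix over ZMod p with (i,j) entry χ(a_i + a_j) + χ(a_i − a_j) + δ₁·χ(a_i² + δ₂·a_j²). Then 2D is a nonzero square in ZMod p, i.e., the quadratic character of ZMod p takes the value 1 at 2D. -/

import Mathlib

/-!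
By Euler's criterion `χ x = x ^ (2m)`, so every entry is a polynomial in `a i ^ 2` and `a j ^ 2`
and the matrix factors as `V C Vᵀ`, where `V` is the Vandermonde matrix of the `a i ^ 2` and `C`
is the coefficient matrix. The half-system property makes the squares `a i ^ 2` distinct, so
`det V ≠ 0`; and `C` is anti-triangular with anti-diagonal entries `δ₁ δ₂ ^ l (2m choose l)`.
Since `p ≡ 1 mod 4`, the signs `±1` are squares, so everything reduces to
`2 ∏ (2m choose l)` being a square, which follows from `((2m)!)² = -1`.
-/

open Matrix Finset Nat Pointwise

lemma Finset.sum_range_two_mul_add_one_of_odd {M : Type*} [AddCommMonoid M] (n : ℕ) (g : ℕ → M)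
    (hg : ∀ r, Odd r → g r = 0) :
    ∑ r ∈ range (2 * n + 1), g r = ∑ l ∈ range (n + 1), g (2 * l) := by
  induction n with
  | zero => simp
  | succ n ih =>
    rw [show 2 * (n + 1) + 1 = 2 * n + 1 + 1 + 1 by ring, sum_range_succ, sum_range_succ, ih,
      hg _ (odd_two_mul_add_one n), add_zero, sum_range_succ _ (n + 1)]
    rfl

lemma add_pow_add_sub_pow_two_mul {R : Type*} [CommRing R] (x y : R) (n : ℕ) :
    (x + y) ^ (2 * n) + (x - y) ^ (2 * n)
      = ∑ l ∈ range (n + 1), (x ^ 2) ^ (n - l) * (2 * (2 * n).choose (2 * l)) * (y ^ 2) ^ l := by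
  have hexp : (x + y) ^ (2 * n) + (x - y) ^ (2 * n)
      = ∑ r ∈ range (2 * n + 1), (y ^ r + (-y) ^ r) * x ^ (2 * n - r) * (2 * n).choose r := by
    rw [add_comm x, add_pow, sub_eq_neg_add, add_pow, ← sum_add_distrib]
    exact sum_congr rfl fun r _ => by ring
  rw [hexp, sum_range_two_mul_add_one_of_odd n _ fun r hr => by rw [hr.neg_pow]; ring]
  refine sum_congr rfl fun l _ => ?_
  rw [(even_two_mul l).neg_pow, ← pow_mul, ← pow_mul, show 2 * (n - l) = 2 * n - 2 * l by omega]
  ring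

lemma Fin.sum_sum_ite_add_eq {M : Type*} [AddCommMonoid M] {N t : ℕ} (ht : t < N)
    (f : ℕ → ℕ → M) :
    ∑ k : Fin N, ∑ l : Fin N, (if (k : ℕ) + l = t then f k l else 0)
      = ∑ l ∈ range (t + 1), f (t - l) l := by
  have hrange (k : ℕ) : ∑ l : Fin N, (if k + (l : ℕ) = t then f k l else 0)
      = ∑ l ∈ range N, if k + l = t then f k l else 0 :=
    Fin.sum_univ_eq_sum_range (fun l => if k + l = t then f k l else 0) N
  have hinner (l : ℕ) : ∑ k ∈ range N, (if k + l = t then f k l else 0)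
      = if l ≤ t then f (t - l) l else 0 := by
    simp only [show ∀ k, (k + l = t) = (k = t - l ∧ l ≤ t) from fun k => propext (by omega),
      ite_and, sum_ite_eq', mem_range, show t - l < N by omega, if_true]
  have hfilter : (range N).filter (· ≤ t) = range (t + 1) := by
    ext l
    simp only [mem_filter, mem_range]
    omega
  simp only [hrange]
  rw [Fin.sum_univ_eq_sum_range (fun k => ∑ l ∈ range N, if k + l = t then f k l else 0) N,
    sum_comm, sum_congr rfl fun l _ => hinner l, ← sum_filter, hfilter]

lemma Matrix.vandermonde_mul_mul_transpose_apply {R : Type*} [CommRing R] {n : ℕ}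
    (u v : Fin n → R) (C : Matrix (Fin n) (Fin n) R) (i j : Fin n) :
    (vandermonde u * C * (vandermonde v)ᵀ) i j
      = ∑ k : Fin n, ∑ l : Fin n, u i ^ (k : ℕ) * C k l * v j ^ (l : ℕ) := by
  simp only [mul_apply, transpose_apply, vandermonde_apply, sum_mul]
  exact sum_comm

section CoeffMatrix

variable {R : Type*} [CommRing R] (m : ℕ) (δ₁ δ₂ : R)

/-- Coefficient of `X ^ k * Y ^ l` in `(x + y)^(2m) + (x - y)^(2m) + δ₁ (X + δ₂ Y)^(2m)`,
where `X = x ^ 2` and `Y = y ^ 2`. -/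
def coeffMatrix : Matrix (Fin (2 * m + 1)) (Fin (2 * m + 1)) R :=
  of fun k l => (if (k : ℕ) + l = m then 2 * ((2 * m).choose (2 * l) : R) else 0)
    + (if (k : ℕ) + l = 2 * m then δ₁ * δ₂ ^ (l : ℕ) * (2 * m).choose l else 0)

lemma sum_coeffMatrix (x y : R) :
    ∑ k : Fin (2 * m + 1), ∑ l : Fin (2 * m + 1),
        (x ^ 2) ^ (k : ℕ) * coeffMatrix m δ₁ δ₂ k l * (y ^ 2) ^ (l : ℕ)
      = (x + y) ^ (2 * m) + (x - y) ^ (2 * m) + δ₁ * (x ^ 2 + δ₂ * y ^ 2) ^ (2 * m) := by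
  simp only [coeffMatrix, of_apply, mul_add, add_mul, mul_ite, ite_mul, mul_zero, zero_mul,
    sum_add_distrib]
  rw [Fin.sum_sum_ite_add_eq (by omega)
      (fun k l => (x ^ 2) ^ k * (2 * ((2 * m).choose (2 * l) : R)) * (y ^ 2) ^ l),
    Fin.sum_sum_ite_add_eq (by omega)
      (fun k l => (x ^ 2) ^ k * (δ₁ * δ₂ ^ l * (2 * m).choose l) * (y ^ 2) ^ l),
    add_pow_add_sub_pow_two_mul, add_comm (x ^ 2), add_pow, mul_sum]
  congr 1
  refine sum_congr rfl fun l _ => ?_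
  ring

lemma vandermonde_mul_coeffMatrix_mul_transpose (a : Fin (2 * m + 1) → R) :
    vandermonde (fun i => a i ^ 2) * coeffMatrix m δ₁ δ₂ * (vandermonde fun i => a i ^ 2)ᵀ
      = of fun i j => (a i + a j) ^ (2 * m) + (a i - a j) ^ (2 * m)
          + δ₁ * (a i ^ 2 + δ₂ * a j ^ 2) ^ (2 * m) := by
  ext i j
  rw [vandermonde_mul_mul_transpose_apply, sum_coeffMatrix, of_apply]

lemma det_coeffMatrix (hm : 1 ≤ m) :
    (coeffMatrix m δ₁ δ₂).det
      = Equiv.Perm.sign (Fin.revPerm : Equiv.Perm (Fin (2 * m + 1)))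
        * ∏ l : Fin (2 * m + 1), δ₁ * δ₂ ^ (l : ℕ) * (2 * m).choose l := by
  set σ : Equiv.Perm (Fin (2 * m + 1)) := Fin.revPerm
  have hrev (k : Fin (2 * m + 1)) : ((σ k : Fin (2 * m + 1)) : ℕ) = 2 * m - k := by
    simp only [σ, Fin.revPerm_apply, Fin.val_rev]
    omega
  have hlower : (coeffMatrix m δ₁ δ₂ (R := R)).submatrix σ id |>.IsLowerTriangular := by
    intro k l hkl
    have : (k : ℕ) < l := hkl
    simp only [submatrix_apply, id, coeffMatrix, of_apply, hrev]
    rw [if_neg (by omega), if_neg (by omega), add_zero]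
  have hdiag (l : Fin (2 * m + 1)) : (coeffMatrix m δ₁ δ₂).submatrix σ id l l
      = δ₁ * δ₂ ^ (l : ℕ) * (2 * m).choose l := by
    simp only [submatrix_apply, id, coeffMatrix, of_apply, hrev]
    rw [if_neg (by omega), if_pos (by omega), zero_add]
  have hsign : ((Equiv.Perm.sign σ : ℤ) : R) * (Equiv.Perm.sign σ : ℤ) = 1 := by
    rw [← Int.cast_mul, ← Units.val_mul, Int.units_mul_self, Units.val_one, Int.cast_one]
  rw [← one_mul (det _), ← hsign, mul_assoc, ← det_permute, det_of_isLowerTriangular _ hlower]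
  simp only [hdiag]

end CoeffMatrix

lemma ZMod.factorial_sq_of_eq_two_mul_add_one {p n : ℕ} [Fact p.Prime] (hp : p = 2 * n + 1) :
    ((n ! : ℕ) : ZMod p) ^ 2 = -(-1) ^ n := by
  have hsplit := factorial_mul_descFactorial (n := p - 1) (k := n) (by omega)
  rw [show p - 1 - n = n by omega] at hsplit
  have hwilson := ZMod.wilsons_lemma (p := p)
  rw [← hsplit, Nat.cast_mul, ZMod.cast_descFactorial (by omega)] at hwilson
  have hsign : ((-1 : ZMod p) ^ n) ^ 2 = 1 := by rw [← pow_mul, pow_mul', neg_one_sq, one_pow]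
  linear_combination (-1) ^ n * hwilson - ((n ! : ℕ) : ZMod p) ^ 2 * hsign

lemma Nat.prod_choose_mul_superFactorial_sq (n : ℕ) :
    (∏ v ∈ range (n + 1), n.choose v) * (sf n) ^ 2 = n ! ^ (n + 1) := by
  have hreflect : ∏ v ∈ range (n + 1), (n - v)! = sf n := by
    rw [← prod_range_succ_factorial, ← prod_range_reflect factorial]
    rfl
  rw [sq]
  nth_rewrite 2 [← hreflect]
  rw [← prod_range_succ_factorial, ← prod_mul_distrib, ← prod_mul_distrib,
    pow_eq_prod_const]
  refine prod_congr rfl fun v hv => ?_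
  rw [← mul_assoc, choose_mul_factorial_mul_factorial (by simpa [Nat.lt_succ_iff] using hv)]

lemma quadraticChar_eq_one_of_eq_one_or_eq_neg_one {F : Type*} [Field F] [Fintype F]
    [DecidableEq F] (hF : Fintype.card F % 4 = 1) {x : F} (hx : x = 1 ∨ x = -1) :
    quadraticChar F x = 1 := by
  have hchar : ringChar F ≠ 2 := by
    rw [Ne, FiniteField.even_card_iff_char_two]
    omega
  rcases hx with rfl | rfl
  · exact map_one _
  · rw [quadraticChar_neg_one hchar, ZMod.χ₄_nat_one_mod_four hF]

/-- With `z = (2m)!`, a square root of `-1` by Wilson's theorem, the product of the binomial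
coefficients is `z ^ (2m + 1)` up to a nonzero square, and `2 z ^ (2m + 1) = ((1 + z) z ^ m) ^ 2`. -/
lemma quadraticChar_two_mul_prod_choose {m p : ℕ} [Fact p.Prime] (hp : p = 4 * m + 1) :
    quadraticChar (ZMod p) (2 * ∏ l : Fin (2 * m + 1), ((2 * m).choose l : ZMod p)) = 1 := by
  set P := ∏ l : Fin (2 * m + 1), ((2 * m).choose l : ZMod p)
  set z := (((2 * m)! : ℕ) : ZMod p)
  set F := ((sf (2 * m) : ℕ) : ZMod p)
  have hz : z ^ 2 = -1 := by
    rw [ZMod.factorial_sq_of_eq_two_mul_add_one (by omega), (even_two_mul m).neg_one_pow]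
  have hz0 : z ≠ 0 := by
    rintro h
    simp [h] at hz
  have hPF : P * F ^ 2 = z ^ (2 * m + 1) := by
    rw [show P = ((∏ v ∈ range (2 * m + 1), (2 * m).choose v : ℕ) : ZMod p) by
      rw [Nat.cast_prod, ← Fin.prod_univ_eq_prod_range (fun v => ((2 * m).choose v : ZMod p))],
      ← Nat.cast_pow, ← Nat.cast_mul, prod_choose_mul_superFactorial_sq, Nat.cast_pow]
  have hF0 : F ≠ 0 := fun h => hz0 (pow_eq_zero_iff (n := 2 * m + 1) (by omega) |>.mp
    (by rw [← hPF, h]; ring))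
  have hw : ((1 + z) * z ^ m) ^ 2 = 2 * z ^ (2 * m + 1) := by
    linear_combination z ^ (2 * m) * hz
  have h2 : (2 : ZMod p) ≠ 0 := by
    refine Ring.two_ne_zero ?_
    rw [ZMod.ringChar_zmod_n]
    omega
  have hw0 : (1 + z) * z ^ m ≠ 0 := by
    rw [← pow_ne_zero_iff two_ne_zero, hw]
    exact mul_ne_zero h2 (pow_ne_zero _ hz0)
  calc quadraticChar (ZMod p) (2 * P)
      = quadraticChar (ZMod p) (2 * P) * quadraticChar (ZMod p) (F ^ 2) := by
        rw [quadraticChar_sq_one' hF0, mul_one]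
    _ = quadraticChar (ZMod p) (((1 + z) * z ^ m) ^ 2) := by
        rw [← map_mul, hw, mul_assoc, hPF]
    _ = 1 := quadraticChar_sq_one' hw0

lemma Function.Injective.sq_of_forall_mem_or_neg_mem {F ι : Type*} [CommRing F]
    [NoZeroDivisors F] [Fintype F] [DecidableEq F] [Fintype ι] {a : ι → F}
    (ha : Function.Injective a) (hcover : ∀ x, (∃ i, a i = x) ∨ ∃ i, a i = -x)
    (hcard : Fintype.card F + 1 = 2 * Fintype.card ι) :
    Function.Injective fun i => a i ^ 2 := by
  set S := univ.image a
  have hunion : S ∪ -S = univ := by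
    refine eq_univ_iff_forall.mpr fun x => ?_
    rcases hcover x with ⟨i, rfl⟩ | ⟨i, hi⟩
    · exact mem_union_left _ (mem_image_of_mem a (mem_univ i))
    · exact mem_union_right _ (mem_neg'.mpr (hi ▸ mem_image_of_mem a (mem_univ i)))
  have hinter : S ∩ -S = {0} := by
    have hcard_inter := card_union_add_card_inter S (-S)
    rw [hunion, card_neg, card_image_of_injective _ ha] at hcard_inter
    simp only [Finset.card_univ] at hcard_inter
    obtain ⟨x, hx⟩ := card_eq_one.mp (show #(S ∩ -S) = 1 by omega)
    have h0S : (0 : F) ∈ S := by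
      rcases hcover 0 with ⟨i, hi⟩ | ⟨i, hi⟩ <;>
        exact mem_image.mpr ⟨i, mem_univ i, by simpa using hi⟩
    have h0 : (0 : F) ∈ S ∩ -S := mem_inter.mpr ⟨h0S, mem_neg'.mpr (by simpa using h0S)⟩
    rw [hx, mem_singleton] at h0
    rw [hx, h0]
  intro i j hij
  rcases sq_eq_sq_iff_eq_or_eq_neg.mp hij with h | h
  · exact ha h
  · have hmem : a i ∈ S ∩ -S := mem_inter.mpr ⟨mem_image_of_mem a (mem_univ i),
      mem_neg'.mpr (by rw [h, neg_neg]; exact mem_image_of_mem a (mem_univ j))⟩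
    rw [hinter, mem_singleton] at hmem
    have haj : a j = 0 := neg_eq_zero.mp (by rw [← h, hmem])
    exact ha (hmem.trans haj.symm)

/-- The half-system extension: for any half-system `a` modulo sign,
`2D` is a nonzero square in `ZMod p`. -/
theorem stmt_19 (m : ℕ) (hm : 1 ≤ m) (p : ℕ) (hpm : p = 4 * m + 1) [Fact p.Prime]
    (χ : ZMod p → ZMod p)
    (hχ : ∀ x : ZMod p, χ x = ((quadraticChar (ZMod p) x : ℤ) : ZMod p))
    (a : Fin (2 * m + 1) → ZMod p) (ha : Function.Injective a)
    (hhalf : ∀ x : ZMod p, (∃ i, a i = x) ∨ (∃ i, a i = -x))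
    (δ₁ δ₂ : ZMod p) (hδ₁ : δ₁ = 1 ∨ δ₁ = -1) (hδ₂ : δ₂ = 1 ∨ δ₂ = -1)
    (D : ZMod p)
    (hD : D = (Matrix.of fun i j : Fin (2 * m + 1) =>
        χ (a i + a j) + χ (a i - a j) + δ₁ * χ (a i ^ 2 + δ₂ * a j ^ 2)).det) :
    quadraticChar (ZMod p) (2 * D) = 1 := by
  have hcard : Fintype.card (ZMod p) % 4 = 1 := by rw [ZMod.card]; omega
  have hχ_pow (x : ZMod p) : χ x = x ^ (2 * m) := by
    rw [hχ, quadraticChar_eq_pow_of_char_ne_two' (by rw [ZMod.ringChar_zmod_n]; omega), ZMod.card,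
      show p / 2 = 2 * m by omega]
  set V := vandermonde fun i => a i ^ 2
  have hV : V.det ≠ 0 := det_vandermonde_ne_zero_iff.mpr <|
    ha.sq_of_forall_mem_or_neg_mem hhalf (by simp only [ZMod.card, Fintype.card_fin]; omega)
  set σ : Equiv.Perm (Fin (2 * m + 1)) := Fin.revPerm
  have hσ : quadraticChar (ZMod p) (Equiv.Perm.sign σ : ℤ) = 1 :=
    quadraticChar_eq_one_of_eq_one_or_eq_neg_one hcard <| by
      rcases Int.units_eq_one_or (Equiv.Perm.sign σ) with h | h <;> simp [h]
  have hδ : quadraticChar (ZMod p) (∏ l : Fin (2 * m + 1), δ₁ * δ₂ ^ (l : ℕ)) = 1 := by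
    refine (map_prod _ _ _).trans <| prod_eq_one fun l _ => ?_
    rw [map_mul, map_pow, quadraticChar_eq_one_of_eq_one_or_eq_neg_one hcard hδ₁,
      quadraticChar_eq_one_of_eq_one_or_eq_neg_one hcard hδ₂, one_pow, one_mul]
  simp only [hχ_pow] at hD
  rw [hD, ← vandermonde_mul_coeffMatrix_mul_transpose, det_mul, det_mul, det_transpose,
    det_coeffMatrix m δ₁ δ₂ hm, prod_mul_distrib]
  calc _ = quadraticChar (ZMod p) (V.det ^ 2) * quadraticChar (ZMod p) (Equiv.Perm.sign σ : ℤ)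
        * quadraticChar (ZMod p) (∏ l : Fin (2 * m + 1), δ₁ * δ₂ ^ (l : ℕ))
        * quadraticChar (ZMod p) (2 * ∏ l : Fin (2 * m + 1), ((2 * m).choose l : ZMod p)) := by
        rw [← map_mul, ← map_mul, ← map_mul]
        congr 1
        ring
    _ = 1 := by
        rw [quadraticChar_sq_one' hV, hσ, hδ, quadraticChar_two_mul_prod_choose hpm]
        norm_num
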